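/- For every unitary U on ℂ^(2^n), the average (1/16^n)·Σ_{P₁,P₂∈Q^{⊗n}} |OTOC(U,P₁,P₂)| is at least 4^{-n}; consequently the Pauli instability satisfies 𝕀(U) ≤ n·log 4. -/

import Mathlib

open Matrix Complex

noncomputable section

/-- The four single-qubit Pauli matrices `I, X, Y, Z`. -/
def pauliMat : Fin 4 → Matrix (Fin 2) (Fin 2) ℂ
  | 0 => 1
  | 1 => !![0, 1; 1, 0]
  | 2 => !![0, -Complex.I; Complex.I, 0]
  | 3 => !![1, 0; 0, -1]

/-- The `k`-th binary digit of `i : Fin (2^n)`. -/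
def qubit {n : ℕ} (k : Fin n) (i : Fin (2 ^ n)) : Fin 2 :=
  ⟨(i : ℕ) / 2 ^ (k : ℕ) % 2, Nat.mod_lt _ (by norm_num)⟩

/-- `n`-fold Kronecker product of single-qubit matrices, as a `2^n × 2^n` matrix. -/
def nfold (n : ℕ) (f : Fin n → Matrix (Fin 2) (Fin 2) ℂ) :
    Matrix (Fin (2 ^ n)) (Fin (2 ^ n)) ℂ :=
  Matrix.of fun i j => ∏ k : Fin n, f k (qubit k i) (qubit k j)

/-- The `n`-qubit Pauli string `P⁽¹⁾ ⊗ ⋯ ⊗ P⁽ⁿ⁾` labelled by `s : Fin n → Fin 4`. -/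
def PauliString (n : ℕ) (s : Fin n → Fin 4) : Matrix (Fin (2 ^ n)) (Fin (2 ^ n)) ℂ :=
  nfold n fun k => pauliMat (s k)

/-- The out-of-time-ordered correlator `2^{-n}·Tr(U†P₁U·P₂·U†P₁U·P₂)`. -/
def OTOC (n : ℕ) (U P₁ P₂ : Matrix (Fin (2 ^ n)) (Fin (2 ^ n)) ℂ) : ℂ :=
  (2 ^ n : ℂ)⁻¹ * (Uᴴ * P₁ * U * P₂ * Uᴴ * P₁ * U * P₂).trace

/-- The Pauli instability `𝕀(U) = -log( 16^{-n} Σ_{P₁,P₂} |OTOC(U,P₁,P₂)| )`. -/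
def pauliInstability (n : ℕ) (U : Matrix (Fin (2 ^ n)) (Fin (2 ^ n)) ℂ) : ℝ :=
  -Real.log ((16 ^ n : ℝ)⁻¹ * ∑ s₁ : Fin n → Fin 4, ∑ s₂ : Fin n → Fin 4,
      ‖OTOC n U (PauliString n s₁) (PauliString n s₂)‖)

/-- `V` is Clifford: it maps every Pauli string to a Pauli string up to a phase. -/
def IsClifford (n : ℕ) (V : Matrix (Fin (2 ^ n)) (Fin (2 ^ n)) ℂ) : Prop :=
  ∀ s : Fin n → Fin 4, ∃ (s' : Fin n → Fin 4) (φ : ℝ),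
    Vᴴ * PauliString n s * V = Complex.exp (-(φ * Complex.I)) • PauliString n s'


lemma qubit_eq_symm {n : ℕ} (k : Fin n) (i : Fin (2 ^ n)) :
    qubit k i = finFunctionFinEquiv.symm i k := by
  ext
  simp [qubit, finFunctionFinEquiv, Equiv.ofRightInverseOfCardLE_symm_apply]

lemma qubit_apply {n : ℕ} (k : Fin n) (f : Fin n → Fin 2) :
    qubit k (finFunctionFinEquiv f) = f k := by
  rw [qubit_eq_symm, Equiv.symm_apply_apply]

lemma pauliString_zero (n : ℕ) : PauliString n (fun _ => 0) = 1 := by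
  ext i j
  by_cases h : i = j
  · subst h
    simp [PauliString, nfold, pauliMat, Matrix.one_apply]
  · have hk : ∃ k : Fin n, qubit k i ≠ qubit k j := by
      by_contra hc
      push_neg at hc
      apply h
      have : finFunctionFinEquiv.symm i = finFunctionFinEquiv.symm j :=
        funext fun k => by rw [← qubit_eq_symm, ← qubit_eq_symm, hc]
      exact finFunctionFinEquiv.symm.injective this
    obtain ⟨k, hk⟩ := hk
    rw [Matrix.one_apply_ne h]
    simp only [PauliString, nfold, Matrix.of_apply]
    refine Finset.prod_eq_zero (Finset.mem_univ k) ?_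
    simp [pauliMat, Matrix.one_apply, hk]

lemma pauli_sum (c : Fin 4) :
    ∑ a : Fin 2, ∑ b : Fin 2, pauliMat c a b * pauliMat c b a = 2 := by
  fin_cases c <;>
    simp [pauliMat, Fin.sum_univ_two, Matrix.one_apply] <;> ring_nf

lemma trace_sq (n : ℕ) (s : Fin n → Fin 4) :
    (PauliString n s * PauliString n s).trace = 2 ^ n := by
  have h1 : (PauliString n s * PauliString n s).trace =
      ∑ i : Fin (2 ^ n), ∑ j : Fin (2 ^ n),
        PauliString n s i j * PauliString n s j i := by
    simp [Matrix.trace, Matrix.mul_apply, Matrix.diag]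
  rw [h1]
  rw [← Equiv.sum_comp (finFunctionFinEquiv (m := 2) (n := n))]
  have h2 : ∀ f : Fin n → Fin 2,
      ∑ j : Fin (2 ^ n), PauliString n s (finFunctionFinEquiv f) j *
          PauliString n s j (finFunctionFinEquiv f) =
      ∑ g : Fin n → Fin 2, ∏ k : Fin n,
        (pauliMat (s k) (f k) (g k) * pauliMat (s k) (g k) (f k)) := by
    intro f
    rw [← Equiv.sum_comp (finFunctionFinEquiv (m := 2) (n := n))]
    refine Finset.sum_congr rfl fun g _ => ?_
    simp [PauliString, nfold, qubit_apply, Finset.prod_mul_distrib]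
  calc ∑ f : Fin n → Fin 2, ∑ j : Fin (2 ^ n),
        PauliString n s (finFunctionFinEquiv f) j *
          PauliString n s j (finFunctionFinEquiv f)
      = ∑ f : Fin n → Fin 2, ∑ g : Fin n → Fin 2, ∏ k : Fin n,
          (pauliMat (s k) (f k) (g k) * pauliMat (s k) (g k) (f k)) :=
        Finset.sum_congr rfl fun f _ => h2 f
    _ = ∑ f : Fin n → Fin 2, ∏ k : Fin n,
          ∑ b : Fin 2, (pauliMat (s k) (f k) b * pauliMat (s k) b (f k)) := by
        refine Finset.sum_congr rfl fun f _ => ?_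
        rw [Fintype.prod_sum]
    _ = ∏ k : Fin n, ∑ a : Fin 2,
          ∑ b : Fin 2, (pauliMat (s k) a b * pauliMat (s k) b a) := by
        rw [Fintype.prod_sum]
    _ = ∏ _k : Fin n, (2 : ℂ) := Finset.prod_congr rfl fun k _ => pauli_sum (s k)
    _ = 2 ^ n := by simp

theorem otoc_avg_lower (n : ℕ) (U : Matrix (Fin (2 ^ n)) (Fin (2 ^ n)) ℂ)
    (hU : U ∈ Matrix.unitaryGroup (Fin (2 ^ n)) ℂ) :
    ((4 : ℝ) ^ n)⁻¹ ≤ (16 ^ n : ℝ)⁻¹ * ∑ s₁ : Fin n → Fin 4, ∑ s₂ : Fin n → Fin 4,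
        ‖OTOC n U (PauliString n s₁) (PauliString n s₂)‖ := by
  have hUU : Uᴴ * U = 1 := by
    have := hU.1
    simpa [Matrix.star_eq_conjTranspose] using this
  have hOTOC : ∀ s₂ : Fin n → Fin 4,
      OTOC n U (PauliString n (fun _ => 0)) (PauliString n s₂) = 1 := by
    intro s₂
    set P := PauliString n s₂ with hP
    rw [pauliString_zero]
    unfold OTOC
    have hE : Uᴴ * 1 * U * P * Uᴴ * 1 * U * P = P * P := by
      rw [mul_one, mul_one, hUU, one_mul, mul_assoc P Uᴴ U, hUU, mul_one]
    rw [hE, trace_sq]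
    have h2 : (2:ℂ)^n ≠ 0 := by norm_num
    field_simp
  have h0 : (∑ s₂ : Fin n → Fin 4, ‖OTOC n U (PauliString n (fun _ => 0)) (PauliString n s₂)‖) = (4:ℝ)^n := by
    simp only [hOTOC, _root_.map_one]
    simp [Finset.card_univ]
  have hsum : ((4:ℝ)^n) ≤ ∑ s₁ : Fin n → Fin 4, ∑ s₂ : Fin n → Fin 4,
      ‖OTOC n U (PauliString n s₁) (PauliString n s₂)‖ := by
    calc ((4:ℝ)^n) = _ := h0.symm
      _ ≤ _ := Finset.single_le_sum
          (f := fun s₁ => ∑ s₂ : Fin n → Fin 4,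
            ‖OTOC n U (PauliString n s₁) (PauliString n s₂)‖)
          (fun s₁ _ => Finset.sum_nonneg fun s₂ _ => norm_nonneg _)
          (Finset.mem_univ _)
  calc ((4:ℝ)^n)⁻¹ = (16^n:ℝ)⁻¹ * (4:ℝ)^n := by
        rw [show (16:ℝ)^n = 4^n * 4^n by rw [← mul_pow]; norm_num]
        field_simp
    _ ≤ _ := mul_le_mul_of_nonneg_left hsum (by positivity)


/-- For every unitary `U` on `ℂ^(2^n)`, the average
`16^{-n} Σ_{P₁,P₂} |OTOC(U,P₁,P₂)|` is at least `4^{-n}`; consequently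
`𝕀(U) ≤ n·log 4`. -/
theorem pauliInstability_le (n : ℕ) (U : Matrix (Fin (2 ^ n)) (Fin (2 ^ n)) ℂ)
    (hU : U ∈ Matrix.unitaryGroup (Fin (2 ^ n)) ℂ) :
    ((4 : ℝ) ^ n)⁻¹ ≤ (16 ^ n : ℝ)⁻¹ * ∑ s₁ : Fin n → Fin 4, ∑ s₂ : Fin n → Fin 4,
        ‖OTOC n U (PauliString n s₁) (PauliString n s₂)‖ ∧
      pauliInstability n U ≤ (n : ℝ) * Real.log 4 := by
  have hA := otoc_avg_lower n U hU
  refine ⟨hA, ?_⟩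
  unfold pauliInstability
  have hpos : (0:ℝ) < ((4:ℝ)^n)⁻¹ := by positivity
  have hlog := Real.log_le_log hpos hA
  rw [Real.log_inv, Real.log_pow] at hlog
  linarith

end
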